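/- Let d ≥ 3 be an integer and α = (d-1)/d. For an integer N ≥ 1 and 0 ≤ i ≤ N^d, define the Hardy constant B₊(N,i) = max over integers x with i < x ≤ N^d of ( ∑_{y=i+1}^{x} exp(y^α) (max(y,1))^{-α} ) · ( ∑_{y=x}^{N^d} exp(-y^α) ). Then there exists k = k(d) > 0 such that B₊(N,i) ≤ k for all N ≥ 1 and all 0 ≤ i < N^d, uniformly in N. -/

import Mathlib

/-!
Both sums are compared with integrals through the mean value theorem. For `t ≥ 1`, the function
`G(t) = t^(1-2α) e^(t^α)` has derivative at least `(1-α) e^(t^α) t^(-α)`, and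
`F(t) = t^(1-α) e^(-t^α)` has derivative at most `-(2α-1) e^(-t^α)`. As the first summand is
increasing and the second decreasing, the sums telescope to `∑_{y=i+1}^x ≲ G(x)` and
`∑_{y=x}^{N^d} ≲ F(x)`, and `G(x) F(x) = x^(2-3α) ≤ 1` precisely because `α ≥ 2/3`,
i.e. `d ≥ 3`.
-/

noncomputable section

def alphaOf (d : ℕ) : ℝ := ((d : ℝ) - 1) / d

/-- The Hardy constant
`B₊(N,i) = max_{i < x ≤ N^d} (∑_{y=i+1}^x e^{y^α} (max(y,1))^{-α}) ·
(∑_{y=x}^{N^d} e^{-y^α})`. -/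
def Bplus (d N i : ℕ) : ℝ :=
  sSup ((fun x : ℕ =>
      (∑ y ∈ Finset.Icc (i + 1) x,
        Real.exp ((y : ℝ) ^ alphaOf d) * ((max y 1 : ℕ) : ℝ) ^ (-alphaOf d)) *
      (∑ y ∈ Finset.Icc x (N ^ d), Real.exp (-(y : ℝ) ^ alphaOf d))) ''
    {x : ℕ | i < x ∧ x ≤ N ^ d})

open Real Set Finset

theorem le_sub_of_hasDerivAt_of_monotoneOn {ψ G G' : ℝ → ℝ} {a : ℝ}
    (hψ : MonotoneOn ψ (Ici a)) (hG : ∀ t ≥ a, HasDerivAt G (G' t) t)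
    (hle : ∀ t ≥ a, ψ t ≤ G' t) {u : ℝ} (hu : a ≤ u) : ψ u ≤ G (u + 1) - G u := by
  obtain ⟨c, ⟨huc, hcu⟩, hc⟩ := exists_hasDerivAt_eq_slope G G' (lt_add_one u)
    (fun t ht => (hG t (hu.trans ht.1)).continuousAt.continuousWithinAt)
    (fun t ht => hG t (hu.trans ht.1.le))
  rw [add_sub_cancel_left, div_one] at hc
  calc ψ u ≤ ψ c := hψ hu (hu.trans huc.le) huc.le
    _ ≤ G' c := hle c (hu.trans huc.le)
    _ = G (u + 1) - G u := hc

theorem le_sub_of_hasDerivAt_of_antitoneOn {φ F F' : ℝ → ℝ} {a : ℝ}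
    (hφ : AntitoneOn φ (Ici a)) (hF : ∀ t ≥ a, HasDerivAt F (F' t) t)
    (hle : ∀ t ≥ a, F' t ≤ -φ t) {u : ℝ} (hu : a ≤ u) : φ (u + 1) ≤ F u - F (u + 1) := by
  obtain ⟨c, ⟨huc, hcu⟩, hc⟩ := exists_hasDerivAt_eq_slope F F' (lt_add_one u)
    (fun t ht => (hF t (hu.trans ht.1)).continuousAt.continuousWithinAt)
    (fun t ht => hF t (hu.trans ht.1.le))
  rw [add_sub_cancel_left, div_one] at hc
  have := hle c (hu.trans huc.le)
  have := hφ (hu.trans huc.le) (hu.trans (huc.trans hcu).le) hcu.le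
  linarith

theorem sum_Icc_le_sub_add_of_hasDerivAt_of_monotoneOn {ψ G G' : ℝ → ℝ} {a b : ℕ}
    (hψ : MonotoneOn ψ (Ici (a : ℝ))) (hG : ∀ t ≥ (a : ℝ), HasDerivAt G (G' t) t)
    (hle : ∀ t ≥ (a : ℝ), ψ t ≤ G' t) (hab : a ≤ b) :
    ∑ n ∈ Icc a b, ψ n ≤ G b - G a + ψ b := by
  induction b, hab using Nat.le_induction with
  | base => simp
  | succ b hab ih =>
    have := le_sub_of_hasDerivAt_of_monotoneOn hψ hG hle (u := b) (by exact_mod_cast hab)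
    rw [sum_Icc_succ_top (by omega)]
    push_cast
    linarith

theorem sum_Icc_le_add_sub_of_hasDerivAt_of_antitoneOn {φ F F' : ℝ → ℝ} {a b : ℕ}
    (hφ : AntitoneOn φ (Ici (a : ℝ))) (hF : ∀ t ≥ (a : ℝ), HasDerivAt F (F' t) t)
    (hle : ∀ t ≥ (a : ℝ), F' t ≤ -φ t) (hab : a ≤ b) :
    ∑ n ∈ Icc a b, φ n ≤ φ a + (F a - F b) := by
  induction b, hab using Nat.le_induction with
  | base => simp
  | succ b hab ih =>
    have := le_sub_of_hasDerivAt_of_antitoneOn hφ hF hle (u := b) (by exact_mod_cast hab)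
    rw [sum_Icc_succ_top (by omega)]
    push_cast
    linarith

theorem hasDerivAt_rpow_mul_exp_mul_rpow {α β σ t : ℝ} (ht : 0 < t) :
    HasDerivAt (fun t => t ^ β * exp (σ * t ^ α))
      ((β * t ^ (β - 1) + σ * α * t ^ (β + α - 1)) * exp (σ * t ^ α)) t := by
  refine ((hasDerivAt_rpow_const (p := β) (Or.inl ht.ne')).mul
    (((hasDerivAt_rpow_const (p := α) (Or.inl ht.ne')).const_mul σ).exp)).congr_deriv ?_
  rw [add_sub_assoc, rpow_add ht]
  ring

theorem monotoneOn_exp_div_self : MonotoneOn (fun s => exp s / s) (Ici 1) := by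
  intro s (hs : 1 ≤ s) s' (hs' : 1 ≤ s') hss'
  have hexp : exp s * (1 + (s' - s)) ≤ exp s' := by
    rw [← sub_add_cancel s' s, exp_add, add_sub_cancel_right, mul_comm (exp _)]
    exact mul_le_mul_of_nonneg_right (by linarith [add_one_le_exp (s' - s)]) (exp_pos s).le
  rw [div_le_div_iff₀ (by linarith) (by linarith)]
  nlinarith [mul_nonneg (mul_nonneg (sub_nonneg.2 hs) (sub_nonneg.2 hss')) (exp_pos s).le]

section

variable {α : ℝ}

theorem monotoneOn_exp_rpow_mul_rpow_neg (hα : 0 ≤ α) :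
    MonotoneOn (fun t => exp (t ^ α) * t ^ (-α)) (Ici 1) := by
  intro t (ht : 1 ≤ t) t' (ht' : 1 ≤ t') htt'
  simp only [rpow_neg (zero_le_one.trans ht), rpow_neg (zero_le_one.trans ht'), ← div_eq_mul_inv]
  exact monotoneOn_exp_div_self (one_le_rpow ht hα) (one_le_rpow ht' hα)
    (rpow_le_rpow (zero_le_one.trans ht) htt' hα)

theorem antitoneOn_exp_neg_rpow (hα : 0 ≤ α) : AntitoneOn (fun t => exp (-t ^ α)) (Ici 0) :=
  fun _ ht _ _ htt' => exp_le_exp.2 (neg_le_neg (rpow_le_rpow ht htt' hα))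

theorem sum_Icc_exp_rpow_mul_rpow_neg_le (h₁ : 1 / 2 ≤ α) (h₂ : α < 1) {a b : ℕ}
    (ha : 1 ≤ a) (hab : a ≤ b) :
    ∑ n ∈ Icc a b, exp ((n : ℝ) ^ α) * (n : ℝ) ^ (-α) ≤
      (2 - α) / (1 - α) * ((b : ℝ) ^ (1 - 2 * α) * exp ((b : ℝ) ^ α)) := by
  have ha' : (1 : ℝ) ≤ a := by exact_mod_cast ha
  have hb' : (1 : ℝ) ≤ b := by exact_mod_cast ha.trans hab
  have hG : ∀ t ≥ (a : ℝ), HasDerivAt (fun t => t ^ (1 - 2 * α) * exp (t ^ α))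
      (((1 - 2 * α) * t ^ (-(2 * α)) + α * t ^ (-α)) * exp (t ^ α)) t := by
    intro t ht
    have h := hasDerivAt_rpow_mul_exp_mul_rpow (α := α) (β := 1 - 2 * α) (σ := 1)
      (by linarith : 0 < t)
    rw [show 1 - 2 * α - 1 = -(2 * α) by ring, show 1 - 2 * α + α - 1 = -α by ring] at h
    simpa only [one_mul] using h
  have hle : ∀ t ≥ (a : ℝ), (1 - α) * (exp (t ^ α) * t ^ (-α)) ≤
      ((1 - 2 * α) * t ^ (-(2 * α)) + α * t ^ (-α)) * exp (t ^ α) := by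
    intro t ht
    have hpow : t ^ (-(2 * α)) ≤ t ^ (-α) :=
      rpow_le_rpow_of_exponent_le (by linarith) (by linarith)
    nlinarith [mul_nonneg (mul_nonneg (by linarith : 0 ≤ 2 * α - 1) (sub_nonneg.2 hpow))
      (exp_pos (t ^ α)).le]
  have hψ : MonotoneOn (fun t => (1 - α) * (exp (t ^ α) * t ^ (-α))) (Ici (a : ℝ)) :=
    fun t ht t' ht' htt' => mul_le_mul_of_nonneg_left (monotoneOn_exp_rpow_mul_rpow_neg
      (by linarith) (ha'.trans ht) (ha'.trans ht') htt') (by linarith)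
  have hsum := sum_Icc_le_sub_add_of_hasDerivAt_of_monotoneOn hψ hG hle hab
  have hGa : 0 ≤ (a : ℝ) ^ (1 - 2 * α) * exp ((a : ℝ) ^ α) := by positivity
  have hlast : (b : ℝ) ^ (-α) ≤ (b : ℝ) ^ (1 - 2 * α) :=
    rpow_le_rpow_of_exponent_le hb' (by linarith)
  have := mul_le_mul_of_nonneg_left
    (mul_le_mul_of_nonneg_right hlast (exp_pos ((b : ℝ) ^ α)).le) (by linarith : 0 ≤ 1 - α)
  rw [← mul_sum] at hsum
  rw [div_mul_eq_mul_div, le_div_iff₀ (by linarith)]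
  linarith

theorem sum_Icc_exp_neg_rpow_le (h₁ : 1 / 2 < α) (h₂ : α ≤ 1) {a b : ℕ} (ha : 1 ≤ a)
    (hab : a ≤ b) :
    ∑ n ∈ Icc a b, exp (-(n : ℝ) ^ α) ≤
      2 * α / (2 * α - 1) * ((a : ℝ) ^ (1 - α) * exp (-(a : ℝ) ^ α)) := by
  have ha' : (1 : ℝ) ≤ a := by exact_mod_cast ha
  have hF : ∀ t ≥ (a : ℝ), HasDerivAt (fun t => t ^ (1 - α) * exp (-t ^ α))
      (((1 - α) * t ^ (-α) - α) * exp (-t ^ α)) t := by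
    intro t ht
    have h := hasDerivAt_rpow_mul_exp_mul_rpow (α := α) (β := 1 - α) (σ := -1)
      (by linarith : 0 < t)
    rw [show 1 - α - 1 = -α by ring, show 1 - α + α - 1 = 0 by ring, rpow_zero] at h
    simp only [neg_one_mul] at h
    exact h.congr_deriv (by ring)
  have hle : ∀ t ≥ (a : ℝ),
      ((1 - α) * t ^ (-α) - α) * exp (-t ^ α) ≤ -((2 * α - 1) * exp (-t ^ α)) := by
    intro t ht
    have hpow : t ^ (-α) ≤ 1 := rpow_le_one_of_one_le_of_nonpos (by linarith) (by linarith)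
    nlinarith [mul_nonneg (mul_nonneg (by linarith : 0 ≤ 1 - α) (sub_nonneg.2 hpow))
      (exp_pos (-t ^ α)).le]
  have hφ : AntitoneOn (fun t => (2 * α - 1) * exp (-t ^ α)) (Ici (a : ℝ)) :=
    fun t (ht : (a : ℝ) ≤ t) t' (ht' : (a : ℝ) ≤ t') htt' => mul_le_mul_of_nonneg_left
      (antitoneOn_exp_neg_rpow (by linarith) (show 0 ≤ t by linarith) (show 0 ≤ t' by linarith)
        htt') (by linarith)
  have hsum := sum_Icc_le_add_sub_of_hasDerivAt_of_antitoneOn hφ hF hle hab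
  have hFb : 0 ≤ (b : ℝ) ^ (1 - α) * exp (-(b : ℝ) ^ α) := by positivity
  have hfirst : (1 : ℝ) ≤ (a : ℝ) ^ (1 - α) := one_le_rpow ha' (by linarith)
  have := mul_le_mul_of_nonneg_left
    (mul_le_mul_of_nonneg_right hfirst (exp_pos (-(a : ℝ) ^ α)).le) (by linarith : 0 ≤ 2 * α - 1)
  rw [← mul_sum] at hsum
  rw [div_mul_eq_mul_div, le_div_iff₀ (by linarith)]
  linarith

theorem hardy_product_le (h₁ : 2 / 3 ≤ α) (h₂ : α < 1) {i x M : ℕ} (hix : i < x)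
    (hxM : x ≤ M) :
    (∑ y ∈ Icc (i + 1) x, exp ((y : ℝ) ^ α) * ((max y 1 : ℕ) : ℝ) ^ (-α)) *
        (∑ y ∈ Icc x M, exp (-(y : ℝ) ^ α)) ≤
      (2 - α) / (1 - α) * (2 * α / (2 * α - 1)) := by
  have hx : (1 : ℝ) ≤ x := by exact_mod_cast hix.trans_le' i.zero_le
  have hS₁ : ∑ y ∈ Icc (i + 1) x, exp ((y : ℝ) ^ α) * ((max y 1 : ℕ) : ℝ) ^ (-α) ≤
      (2 - α) / (1 - α) * ((x : ℝ) ^ (1 - 2 * α) * exp ((x : ℝ) ^ α)) := by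
    rw [sum_congr rfl fun y hy => by rw [max_eq_left ((mem_Icc.1 hy).1.trans' i.succ_pos)]]
    exact sum_Icc_exp_rpow_mul_rpow_neg_le (by linarith) h₂ i.succ_pos hix
  have hS₂ := sum_Icc_exp_neg_rpow_le (by linarith) h₂.le (i.succ_pos.trans_le hix) hxM
  have hprod : (x : ℝ) ^ (1 - 2 * α) * exp ((x : ℝ) ^ α) *
      ((x : ℝ) ^ (1 - α) * exp (-(x : ℝ) ^ α)) ≤ 1 := by
    rw [mul_mul_mul_comm, ← rpow_add (by linarith), ← exp_add, add_neg_cancel, exp_zero,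
      mul_one]
    exact rpow_le_one_of_one_le_of_nonpos hx (by linarith)
  have hc₁ : 0 < (2 - α) / (1 - α) := div_pos (by linarith) (by linarith)
  have hc₂ : 0 < 2 * α / (2 * α - 1) := div_pos (by linarith) (by linarith)
  calc _ ≤ (2 - α) / (1 - α) * ((x : ℝ) ^ (1 - 2 * α) * exp ((x : ℝ) ^ α)) *
        (2 * α / (2 * α - 1) * ((x : ℝ) ^ (1 - α) * exp (-(x : ℝ) ^ α))) :=
        mul_le_mul hS₁ hS₂ (sum_nonneg fun _ _ => (exp_pos _).le) (by positivity)
    _ = (2 - α) / (1 - α) * (2 * α / (2 * α - 1)) *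
        ((x : ℝ) ^ (1 - 2 * α) * exp ((x : ℝ) ^ α) *
          ((x : ℝ) ^ (1 - α) * exp (-(x : ℝ) ^ α))) := by ring
    _ ≤ _ := mul_le_of_le_one_right (by positivity) hprod

end

/-- For every `d ≥ 3` there is `k = k(d) > 0` such that `B₊(N,i) ≤ k` for all
`N ≥ 1` and all `0 ≤ i < N^d`, uniformly in `N`. -/
theorem Bplus_bounded_high_dim (d : ℕ) (hd : 3 ≤ d) :
    ∃ k : ℝ, 0 < k ∧ ∀ N : ℕ, 1 ≤ N → ∀ i : ℕ, i < N ^ d → Bplus d N i ≤ k := by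
  have hd' : (3 : ℝ) ≤ d := by exact_mod_cast hd
  have h₁ : 2 / 3 ≤ alphaOf d := by rw [alphaOf, le_div_iff₀ (by linarith)]; linarith
  have h₂ : alphaOf d < 1 := by rw [alphaOf, div_lt_one (by linarith)]; linarith
  have hk : 0 < (2 - alphaOf d) / (1 - alphaOf d) * (2 * alphaOf d / (2 * alphaOf d - 1)) :=
    mul_pos (div_pos (by linarith) (by linarith)) (div_pos (by linarith) (by linarith))
  refine ⟨_, hk, fun N _ i _ => Real.sSup_le ?_ hk.le⟩
  rintro _ ⟨x, ⟨hix, hxN⟩, rfl⟩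
  exact hardy_product_le h₁ h₂ hix hxN

end
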